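/- Let T > 0 and let g : [0,T] → ℝ be absolutely continuous with g(t) = g(0) + ∫_0^t g'(s) ds and g' ∈ L²(0,T). For n ∈ ℕ, n ≥ 1, set τ = T/n and let Q_n(g) = [g]_n = (g_0,…,g_n) with g_k = (1/τ)∫_{t_{k−1}}^{t_k} g(t) dt for k = 1,…,n and g_0 = g(0). Then (i) ‖[g]_n‖²_{w¹₂} ≤ ‖g‖²_{W¹₂(0,T)} + ∫_0^τ g'(s)² ds; and (ii) for every ε > 0 and R > ε, if ‖g‖_{W¹₂(0,T)} ≤ R − ε then there exists N such that ‖Q_n(g)‖_{w¹₂} ≤ R for all n ≥ N. -/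

import Mathlib

open MeasureTheory

/-- The Steklov averages `Q_n(g) = (g_0, …, g_n)` of `g`, with `g_0 = g(0)`. -/
noncomputable def steklovAvg (T : ℝ) (n : ℕ) (g : ℝ → ℝ) (k : ℕ) : ℝ :=
  if k = 0 then g 0
  else (1 / (T / n)) * ∫ t in ((k : ℝ) - 1) * (T / n)..(k : ℝ) * (T / n), g t

/-- The square of the discrete Sobolev norm `‖[g]_n‖²_{w¹₂}`. -/
noncomputable def discNormSq (T : ℝ) (n : ℕ) (G : ℕ → ℝ) : ℝ :=
  ∑ k ∈ Finset.Icc 1 n, (T / n) * (G k) ^ 2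
    + ∑ k ∈ Finset.Icc 1 n, (T / n) * ((G k - G (k - 1)) / (T / n)) ^ 2

/-!
Everything rests on Cauchy–Schwarz over cells of length `τ = T / n`. It gives
`τ g_k² ≤ ∫_{cell k} g²`, which sums to `∫_0^T g²`. For `k ≥ 2`, `g_k - g_{k-1}` is the average
over cell `k - 1` of `g(t + τ) - g(t)`, and `(g(t + τ) - g(t))² ≤ τ (P(t + τ) - P(t))` for the
primitive `P` of `g'²`; averaging bounds the `k`-th difference quotient term by `Φ_k - Φ_{k-1}`,
where `Φ_k` is the average of `P` over cell `k`, and these telescope to at most `P(T) = ∫_0^T g'²`.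
The first difference `g_1 - g(0)` is controlled the same way by `∫_0^τ g'²`, and part (ii) follows
from (i) because `∫_0^{T/n} g'² → 0`.
-/

open Set intervalIntegral Filter Topology
open scoped Interval

theorem mul_div_sq_le_iff {τ d c : ℝ} (hτ : 0 < τ) :
    τ * (d / τ) ^ 2 ≤ c ↔ d ^ 2 ≤ τ * c := by
  rw [div_pow, mul_div_assoc', sq τ, mul_div_mul_left _ _ hτ.ne', div_le_iff₀' hτ]

theorem sq_integral_le_mul_integral_sq {f : ℝ → ℝ} {a b : ℝ} (hab : a ≤ b)
    (hf : IntervalIntegrable f volume a b)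
    (hf2 : IntervalIntegrable (fun x => f x ^ 2) volume a b) :
    (∫ x in a..b, f x) ^ 2 ≤ (b - a) * ∫ x in a..b, f x ^ 2 := by
  rcases hab.eq_or_lt with rfl | hlt
  · simp
  have hba : 0 < b - a := sub_pos.2 hlt
  have hjensen := (even_two.convexOn_pow (𝕜 := ℝ)).map_set_average_le
    (continuous_pow 2).continuousOn isClosed_univ (μ := volume) (t := Ι a b) (f := f)
    (by simp [hba.ne']) (by simp) (by simp) hf.def' hf2.def'
  simp only [interval_average_eq, smul_eq_mul] at hjensen
  rwa [mul_pow, inv_pow, sq, mul_inv, mul_assoc, mul_le_mul_iff_right₀ (inv_pos.2 hba),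
    inv_mul_le_iff₀ hba] at hjensen

theorem sq_average_le_integral_of_sq_le {w B : ℝ → ℝ} {x τ : ℝ} (hτ : 0 < τ)
    (hw : IntervalIntegrable w volume x (x + τ))
    (hw2 : IntervalIntegrable (fun t => w t ^ 2) volume x (x + τ))
    (hB : IntervalIntegrable B volume x (x + τ))
    (hwB : ∀ t ∈ Icc x (x + τ), w t ^ 2 ≤ τ * B t) :
    (τ⁻¹ * ∫ t in x..x + τ, w t) ^ 2 ≤ ∫ t in x..x + τ, B t := by
  have hx : x ≤ x + τ := by linarith
  have hcs := sq_integral_le_mul_integral_sq hx hw hw2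
  rw [add_sub_cancel_left, ← inv_mul_le_iff₀ hτ] at hcs
  calc (τ⁻¹ * ∫ t in x..x + τ, w t) ^ 2 = τ⁻¹ * (τ⁻¹ * (∫ t in x..x + τ, w t) ^ 2) := by ring
    _ ≤ τ⁻¹ * ∫ t in x..x + τ, τ * B t := by
      gcongr
      exact hcs.trans (integral_mono_on hx hw2 (hB.const_mul τ) hwB)
    _ = ∫ t in x..x + τ, B t := by
      rw [intervalIntegral.integral_const_mul, inv_mul_cancel_left₀ hτ.ne']

section Primitive

variable {u v : ℝ → ℝ} {a b : ℝ}

theorem sub_eq_integral_of_eq_add_integral (hv : IntegrableOn v (Icc a b))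
    (hu : ∀ t ∈ Icc a b, u t = u a + ∫ s in a..t, v s) {x y : ℝ}
    (hx : x ∈ Icc a b) (hy : y ∈ Icc a b) :
    u y - u x = ∫ s in x..y, v s := by
  have ha : a ∈ Icc a b := ⟨le_rfl, hx.1.trans hx.2⟩
  rw [hu y hy, hu x hx, add_sub_add_left_eq_sub, integral_interval_sub_left]
  · exact (hv.mono_set (uIcc_subset_Icc ha hy)).intervalIntegrable
  · exact (hv.mono_set (uIcc_subset_Icc ha hx)).intervalIntegrable

theorem continuousOn_of_eq_add_integral (hv : IntegrableOn v (Icc a b))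
    (hu : ∀ t ∈ Icc a b, u t = u a + ∫ s in a..t, v s) :
    ContinuousOn u (Icc a b) := by
  rcases le_or_gt a b with hab | hba
  · have hprim := continuousOn_primitive_interval'
      ((intervalIntegrable_iff_integrableOn_Icc_of_le hab).2 hv) left_mem_uIcc
    exact ((hprim.mono Icc_subset_uIcc).const_add (u a)).congr hu
  · simp [Icc_eq_empty_of_lt hba]

theorem sq_sub_le_mul_integral_sq (hv : IntegrableOn v (Icc a b))
    (hv2 : IntegrableOn (fun t => v t ^ 2) (Icc a b))
    (hu : ∀ t ∈ Icc a b, u t = u a + ∫ s in a..t, v s) {x y : ℝ}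
    (hx : x ∈ Icc a b) (hy : y ∈ Icc a b) (hxy : x ≤ y) :
    (u y - u x) ^ 2 ≤ (y - x) * ∫ s in x..y, v s ^ 2 := by
  rw [sub_eq_integral_of_eq_add_integral hv hu hx hy]
  exact sq_integral_le_mul_integral_sq hxy
    (hv.mono_set (uIcc_subset_Icc hx hy)).intervalIntegrable
    (hv2.mono_set (uIcc_subset_Icc hx hy)).intervalIntegrable

theorem continuousOn_integral_of_integrableOn_Icc (hv : IntegrableOn v (Icc a b)) :
    ContinuousOn (fun t => ∫ s in a..t, v s) (Icc a b) :=
  continuousOn_of_eq_add_integral hv fun t _ => by rw [integral_same, zero_add]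

theorem sq_average_sub_left_le (hv : IntegrableOn v (Icc a b))
    (hv2 : IntegrableOn (fun t => v t ^ 2) (Icc a b))
    (hu : ∀ t ∈ Icc a b, u t = u a + ∫ s in a..t, v s) {x τ : ℝ} (hτ : 0 < τ)
    (hsub : Icc x (x + τ) ⊆ Icc a b) :
    τ * ((τ⁻¹ * (∫ t in x..x + τ, u t) - u x) / τ) ^ 2 ≤ ∫ t in x..x + τ, v t ^ 2 := by
  have hxτ : x ≤ x + τ := by linarith
  have hx : x ∈ Icc a b := hsub (left_mem_Icc.2 hxτ)
  have hu' : ContinuousOn u (Icc x (x + τ)) := (continuousOn_of_eq_add_integral hv hu).mono hsub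
  have hw : ContinuousOn (fun t => u t - u x) (Icc x (x + τ)) := hu'.sub continuousOn_const
  have hv2' : IntervalIntegrable (fun t => v t ^ 2) volume x (x + τ) :=
    (hv2.mono_set (by rwa [uIcc_of_le hxτ])).intervalIntegrable
  have hpointwise : ∀ t ∈ Icc x (x + τ),
      (u t - u x) ^ 2 ≤ τ * ∫ s in x..x + τ, v s ^ 2 := by
    intro t ht
    calc (u t - u x) ^ 2 ≤ (t - x) * ∫ s in x..t, v s ^ 2 :=
          sq_sub_le_mul_integral_sq hv hv2 hu hx (hsub ht) ht.1
      _ ≤ τ * ∫ s in x..x + τ, v s ^ 2 := by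
          gcongr
          · exact integral_nonneg ht.1 fun s _ => sq_nonneg _
          · linarith [ht.2]
          · exact integral_mono_interval le_rfl ht.1 ht.2
              (Eventually.of_forall fun s => sq_nonneg _) hv2'
  have hjensen := sq_average_le_integral_of_sq_le hτ (hw.intervalIntegrable_of_Icc hxτ)
    ((hw.pow 2).intervalIntegrable_of_Icc hxτ) intervalIntegrable_const hpointwise
  rw [integral_sub (hu'.intervalIntegrable_of_Icc hxτ) intervalIntegrable_const,
    intervalIntegral.integral_const, intervalIntegral.integral_const, smul_eq_mul, smul_eq_mul,
    add_sub_cancel_left, mul_sub, inv_mul_cancel_left₀ hτ.ne'] at hjensen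
  exact (mul_div_sq_le_iff hτ).2 hjensen

theorem sq_average_shift_sub_le (hv : IntegrableOn v (Icc a b))
    (hv2 : IntegrableOn (fun t => v t ^ 2) (Icc a b))
    (hu : ∀ t ∈ Icc a b, u t = u a + ∫ s in a..t, v s) {x τ : ℝ} (hτ : 0 < τ)
    (hsub : Icc x (x + τ + τ) ⊆ Icc a b) :
    τ * ((τ⁻¹ * (∫ t in x + τ..x + τ + τ, u t) - τ⁻¹ * ∫ t in x..x + τ, u t) / τ) ^ 2 ≤
      τ⁻¹ * (∫ t in x + τ..x + τ + τ, ∫ s in a..t, v s ^ 2)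
        - τ⁻¹ * ∫ t in x..x + τ, ∫ s in a..t, v s ^ 2 := by
  set P : ℝ → ℝ := fun t => ∫ s in a..t, v s ^ 2
  have hP : ∀ t ∈ Icc a b, P t = P a + ∫ s in a..t, v s ^ 2 := fun t _ => by
    simp only [P, integral_same, zero_add]
  have hxτ : x ≤ x + τ := by linarith
  have hsub₀ : Icc x (x + τ) ⊆ Icc a b := hsub.trans' (Icc_subset_Icc_right (by linarith))
  have hshift : MapsTo (· + τ) (Icc x (x + τ)) (Icc a b) := fun t ht =>
    hsub ⟨by linarith [ht.1], by linarith [ht.2]⟩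
  have huc := continuousOn_of_eq_add_integral hv hu
  have hPc : ContinuousOn P (Icc a b) := continuousOn_integral_of_integrableOn_Icc hv2
  have huτ : ContinuousOn (fun t => u (t + τ)) (Icc x (x + τ)) :=
    huc.comp (continuous_add_const τ).continuousOn hshift
  have hPτ : ContinuousOn (fun t => P (t + τ)) (Icc x (x + τ)) :=
    hPc.comp (continuous_add_const τ).continuousOn hshift
  have hw : ContinuousOn (fun t => u (t + τ) - u t) (Icc x (x + τ)) := huτ.sub (huc.mono hsub₀)
  have hB : ContinuousOn (fun t => P (t + τ) - P t) (Icc x (x + τ)) := hPτ.sub (hPc.mono hsub₀)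
  have hpointwise : ∀ t ∈ Icc x (x + τ), (u (t + τ) - u t) ^ 2 ≤ τ * (P (t + τ) - P t) := by
    intro t ht
    have hsq := sq_sub_le_mul_integral_sq hv hv2 hu (hsub₀ ht) (hshift ht) (by linarith)
    rwa [add_sub_cancel_left, ← sub_eq_integral_of_eq_add_integral hv2 hP (hsub₀ ht)
      (hshift ht)] at hsq
  have hjensen := sq_average_le_integral_of_sq_le hτ (hw.intervalIntegrable_of_Icc hxτ)
    ((hw.pow 2).intervalIntegrable_of_Icc hxτ)
    (hB.intervalIntegrable_of_Icc hxτ) hpointwise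
  rw [integral_sub (huτ.intervalIntegrable_of_Icc hxτ)
      ((huc.mono hsub₀).intervalIntegrable_of_Icc hxτ),
    integral_sub (hPτ.intervalIntegrable_of_Icc hxτ)
      ((hPc.mono hsub₀).intervalIntegrable_of_Icc hxτ),
    integral_comp_add_right u, integral_comp_add_right P, mul_sub] at hjensen
  rw [mul_div_sq_le_iff hτ]
  convert hjensen using 1
  rw [mul_sub, mul_inv_cancel_left₀ hτ.ne', mul_inv_cancel_left₀ hτ.ne']

theorem average_primitive_le_integral {f : ℝ → ℝ} (hf : IntegrableOn f (Icc a b)) (hf0 : 0 ≤ f)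
    {x τ : ℝ} (hτ : 0 < τ) (hsub : Icc x (x + τ) ⊆ Icc a b) :
    τ⁻¹ * ∫ t in x..x + τ, ∫ s in a..t, f s ≤ ∫ s in a..b, f s := by
  have hxτ : x ≤ x + τ := by linarith
  have hab : a ≤ b := (hsub (left_mem_Icc.2 hxτ)).1.trans (hsub (left_mem_Icc.2 hxτ)).2
  have hle : ∀ t ∈ Icc x (x + τ), ∫ s in a..t, f s ≤ ∫ s in a..b, f s := fun t ht =>
    integral_mono_interval le_rfl (hsub ht).1 (hsub ht).2 (Eventually.of_forall hf0)
      ((intervalIntegrable_iff_integrableOn_Icc_of_le hab).2 hf)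
  calc τ⁻¹ * ∫ t in x..x + τ, ∫ s in a..t, f s ≤ τ⁻¹ * ∫ _ in x..x + τ, ∫ s in a..b, f s := by
        gcongr
        exact integral_mono_on hxτ
          (((continuousOn_integral_of_integrableOn_Icc hf).mono hsub).intervalIntegrable_of_Icc hxτ)
          intervalIntegrable_const hle
    _ = ∫ s in a..b, f s := by
        rw [intervalIntegral.integral_const, smul_eq_mul, add_sub_cancel_left,
          inv_mul_cancel_left₀ hτ.ne']

end Primitive

theorem sum_Icc_one_eq_sum_range {M : Type*} [AddCommMonoid M] (f : ℕ → M) (n : ℕ) :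
    ∑ k ∈ Finset.Icc 1 n, f k = ∑ i ∈ Finset.range n, f (i + 1) := by
  rw [Finset.range_eq_Ico, Finset.sum_Ico_add' f 0 n 1]
  rfl

theorem natCast_mul_div_mem_Icc {T : ℝ} (hT : 0 ≤ T) {i n : ℕ} (hi : i ≤ n) :
    (i : ℝ) * (T / n) ∈ Icc 0 T := by
  refine ⟨by positivity, ?_⟩
  rcases n.eq_zero_or_pos with rfl | hn
  · simp [hT]
  rw [← mul_div_assoc, div_le_iff₀ (by positivity), mul_comm]
  gcongr

section Steklov

variable {T : ℝ} {n : ℕ} {u v : ℝ → ℝ}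

theorem steklovAvg_zero : steklovAvg T n u 0 = u 0 := if_pos rfl

theorem steklovAvg_succ {τ : ℝ} (hτ : T / n = τ) (k : ℕ) :
    steklovAvg T n u (k + 1) = τ⁻¹ * ∫ t in k * τ..k * τ + τ, u t := by
  subst hτ
  rw [steklovAvg, if_neg k.succ_ne_zero, one_div, Nat.cast_succ, add_sub_cancel_right, add_mul,
    one_mul]

theorem sum_mul_sq_steklovAvg_le (hT : 0 < T) (hn : 1 ≤ n) (hu : IntegrableOn u (Icc 0 T))
    (hu2 : IntegrableOn (fun t => u t ^ 2) (Icc 0 T)) :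
    ∑ k ∈ Finset.Icc 1 n, T / n * steklovAvg T n u k ^ 2 ≤ ∫ t in 0..T, u t ^ 2 := by
  generalize hτdef : T / n = τ
  have hτ : 0 < τ := hτdef ▸ div_pos hT (by exact_mod_cast hn)
  have hsucc : ∀ i : ℕ, ((i + 1 : ℕ) : ℝ) * τ = i * τ + τ := fun i => by push_cast; ring
  have hnode : ∀ i ≤ n, (i : ℝ) * τ ∈ Icc 0 T := fun i hi =>
    hτdef ▸ natCast_mul_div_mem_Icc hT.le hi
  have hcell : ∀ i < n, uIcc ((i : ℝ) * τ) (((i + 1 : ℕ) : ℝ) * τ) ⊆ Icc 0 T := fun i hi =>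
    uIcc_subset_Icc (hnode i hi.le) (hnode (i + 1) hi)
  rw [sum_Icc_one_eq_sum_range]
  calc ∑ i ∈ Finset.range n, τ * steklovAvg T n u (i + 1) ^ 2
      ≤ ∑ i ∈ Finset.range n, ∫ t in (i : ℝ) * τ..((i + 1 : ℕ) : ℝ) * τ, u t ^ 2 := by
        refine Finset.sum_le_sum fun i hi => ?_
        have hcell_i := hcell i (Finset.mem_range.1 hi)
        have hcs := sq_integral_le_mul_integral_sq (by rw [hsucc]; linarith)
          (hu.mono_set hcell_i).intervalIntegrable (hu2.mono_set hcell_i).intervalIntegrable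
        rw [hsucc, add_sub_cancel_left] at hcs
        rw [steklovAvg_succ hτdef, hsucc, inv_mul_eq_div, mul_div_sq_le_iff hτ]
        exact hcs
    _ = ∫ t in (0 : ℕ) * τ..(n : ℝ) * τ, u t ^ 2 :=
        sum_integral_adjacent_intervals fun i hi => (hu2.mono_set (hcell i hi)).intervalIntegrable
    _ = ∫ t in 0..T, u t ^ 2 := by
        rw [Nat.cast_zero, zero_mul, ← hτdef, mul_div_cancel₀ _ (by positivity)]

theorem mul_sq_sub_steklovAvg_one_le (hT : 0 < T) (hn : 1 ≤ n)
    (hv : IntegrableOn v (Icc 0 T)) (hv2 : IntegrableOn (fun t => v t ^ 2) (Icc 0 T))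
    (hu : ∀ t ∈ Icc 0 T, u t = u 0 + ∫ s in 0..t, v s) :
    T / n * ((steklovAvg T n u 1 - steklovAvg T n u 0) / (T / n)) ^ 2
      ≤ ∫ t in 0..T / n, v t ^ 2 := by
  generalize hτdef : T / n = τ
  have hτ : 0 < τ := hτdef ▸ div_pos hT (by exact_mod_cast hn)
  have hτT : 0 + τ ≤ T := by simpa [← hτdef] using (natCast_mul_div_mem_Icc hT.le hn).2
  have hbound := sq_average_sub_left_le hv hv2 hu hτ (Icc_subset_Icc le_rfl hτT)
  rw [zero_add] at hbound
  rwa [← zero_add 1, steklovAvg_succ hτdef, steklovAvg_zero, Nat.cast_zero, zero_mul, zero_add]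

theorem mul_sq_sub_steklovAvg_succ_le (hT : 0 < T) {i : ℕ} (hi : i + 2 ≤ n)
    (hv : IntegrableOn v (Icc 0 T)) (hv2 : IntegrableOn (fun t => v t ^ 2) (Icc 0 T))
    (hu : ∀ t ∈ Icc 0 T, u t = u 0 + ∫ s in 0..t, v s) :
    T / n * ((steklovAvg T n u (i + 2) - steklovAvg T n u (i + 1)) / (T / n)) ^ 2
      ≤ steklovAvg T n (fun t => ∫ s in 0..t, v s ^ 2) (i + 2)
        - steklovAvg T n (fun t => ∫ s in 0..t, v s ^ 2) (i + 1) := by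
  generalize hτdef : T / n = τ
  have hτ : 0 < τ := hτdef ▸ div_pos hT (by exact_mod_cast (by omega : 1 ≤ n))
  have hsucc : ∀ j : ℕ, ((j + 1 : ℕ) : ℝ) * τ = j * τ + τ := fun j => by push_cast; ring
  have hstart := (natCast_mul_div_mem_Icc hT.le (by omega : i ≤ n)).1
  have hend := (natCast_mul_div_mem_Icc hT.le hi).2
  rw [hτdef, hsucc, hsucc] at hend
  rw [hτdef] at hstart
  have hbound := sq_average_shift_sub_le hv hv2 hu hτ (Icc_subset_Icc hstart hend)
  rwa [steklovAvg_succ hτdef, steklovAvg_succ hτdef, steklovAvg_succ hτdef,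
    steklovAvg_succ hτdef, hsucc]

theorem sum_mul_sq_sub_steklovAvg_le (hT : 0 < T) (hn : 1 ≤ n)
    (hv : IntegrableOn v (Icc 0 T)) (hv2 : IntegrableOn (fun t => v t ^ 2) (Icc 0 T))
    (hu : ∀ t ∈ Icc 0 T, u t = u 0 + ∫ s in 0..t, v s) :
    ∑ k ∈ Finset.Icc 1 n, T / n * ((steklovAvg T n u k - steklovAvg T n u (k - 1)) / (T / n)) ^ 2
      ≤ (∫ t in 0..T, v t ^ 2) + ∫ t in 0..T / n, v t ^ 2 := by
  obtain ⟨m, rfl⟩ : ∃ m, n = m + 1 := ⟨n - 1, by omega⟩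
  set Φ : ℕ → ℝ := fun i => steklovAvg T (m + 1) (fun t => ∫ s in 0..t, v s ^ 2) (i + 1)
  have hstep : ∀ i ∈ Finset.range m, T / (m + 1 : ℕ) * ((steklovAvg T (m + 1) u (i + 2)
      - steklovAvg T (m + 1) u (i + 1)) / (T / (m + 1 : ℕ))) ^ 2 ≤ Φ (i + 1) - Φ i :=
    fun i hi => mul_sq_sub_steklovAvg_succ_le hT (by rw [Finset.mem_range] at hi; omega) hv hv2 hu
  generalize hτdef : T / ((m + 1 : ℕ) : ℝ) = τ at hstep
  have hτ : 0 < τ := hτdef ▸ by positivity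
  have hΦ0 : 0 ≤ Φ 0 := by
    simp only [Φ, steklovAvg_succ hτdef, Nat.cast_zero, zero_mul, zero_add]
    exact mul_nonneg (inv_nonneg.2 hτ.le)
      (integral_nonneg hτ.le fun t ht => integral_nonneg ht.1 fun s _ => sq_nonneg _)
  have hΦm : Φ m ≤ ∫ t in 0..T, v t ^ 2 := by
    have hstart := (natCast_mul_div_mem_Icc hT.le m.le_succ).1
    have hend := (natCast_mul_div_mem_Icc hT.le (le_refl (m + 1))).2
    rw [hτdef] at hstart hend
    rw [Nat.cast_succ, add_one_mul] at hend
    simp only [Φ, steklovAvg_succ hτdef]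
    exact average_primitive_le_integral hv2 (fun t => sq_nonneg _) hτ
      (Icc_subset_Icc hstart hend)
  rw [sum_Icc_one_eq_sum_range, Finset.sum_range_succ']
  simp only [Nat.add_sub_cancel]
  calc _ ≤ ∑ i ∈ Finset.range m, (Φ (i + 1) - Φ i) + ∫ t in 0..τ, v t ^ 2 :=
        add_le_add (Finset.sum_le_sum hstep) (hτdef ▸ mul_sq_sub_steklovAvg_one_le hT hn hv hv2 hu)
    _ ≤ _ := by
      rw [Finset.sum_range_sub]
      linarith

theorem discNormSq_steklovAvg_le (hT : 0 < T) (hn : 1 ≤ n)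
    (hv : IntegrableOn v (Icc 0 T)) (hv2 : IntegrableOn (fun t => v t ^ 2) (Icc 0 T))
    (hu : ∀ t ∈ Icc 0 T, u t = u 0 + ∫ s in 0..t, v s) :
    discNormSq T n (steklovAvg T n u)
      ≤ ((∫ t in 0..T, u t ^ 2) + ∫ t in 0..T, v t ^ 2) + ∫ t in 0..T / n, v t ^ 2 := by
  have huc := continuousOn_of_eq_add_integral hv hu
  have hmean := sum_mul_sq_steklovAvg_le hT hn huc.integrableOn_Icc (huc.pow 2).integrableOn_Icc
  have hdiff := sum_mul_sq_sub_steklovAvg_le hT hn hv hv2 hu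
  rw [discNormSq]
  linarith

end Steklov

theorem tendsto_integral_zero_div_natCast {f : ℝ → ℝ} {T : ℝ} (hT : 0 ≤ T)
    (hf : IntegrableOn f (Icc 0 T)) :
    Tendsto (fun n : ℕ => ∫ s in 0..T / n, f s) atTop (𝓝 0) := by
  have hcont := continuousOn_integral_of_integrableOn_Icc hf 0 ⟨le_rfl, hT⟩
  have hlim : Tendsto (fun n : ℕ => T / n) atTop (𝓝[Icc 0 T] 0) :=
    tendsto_nhdsWithin_iff.2 ⟨tendsto_const_div_atTop_nhds_zero_nat T,
      (eventually_ge_atTop 1).mono fun n hn => by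
        simpa using natCast_mul_div_mem_Icc hT hn⟩
  have hcomp := hcont.tendsto.comp hlim
  rwa [integral_same] at hcomp

theorem eventually_sqrt_le_of_le_add {x y : ℕ → ℝ} {A ε R : ℝ} (hε : 0 < ε) (hA : √A ≤ R - ε)
    (hy : Tendsto y atTop (𝓝 0)) (hxy : ∀ᶠ n in atTop, x n ≤ A + y n) :
    ∀ᶠ n in atTop, √(x n) ≤ R := by
  have hRε : 0 ≤ R - ε := (Real.sqrt_nonneg A).trans hA
  have hA' : A ≤ (R - ε) ^ 2 := (Real.sqrt_le_left hRε).1 hA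
  filter_upwards [hxy, hy.eventually (gt_mem_nhds (show 0 < ε * (2 * R - ε) by nlinarith))]
    with n hxn hyn
  rw [Real.sqrt_le_left (by linarith)]
  nlinarith

/-- (i) `‖Q_n(g)‖²_{w¹₂} ≤ ‖g‖²_{W¹₂(0,T)} + ∫_0^τ g'²`; and (ii) if `‖g‖_{W¹₂(0,T)} ≤ R − ε`
then `‖Q_n(g)‖_{w¹₂} ≤ R` for all sufficiently large `n`. -/
theorem steklov_map_discrete_norm_bound (T : ℝ) (hT : 0 < T)
    (g g' : ℝ → ℝ)
    (hint : IntegrableOn g' (Set.Icc (0 : ℝ) T))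
    (hac : ∀ t ∈ Set.Icc (0 : ℝ) T, g t = g 0 + ∫ s in (0 : ℝ)..t, g' s)
    (hL2 : MemLp g' 2 (volume.restrict (Set.Ioc (0 : ℝ) T))) :
    (∀ n : ℕ, 1 ≤ n →
      discNormSq T n (steklovAvg T n g)
        ≤ ((∫ t in (0 : ℝ)..T, (g t) ^ 2) + ∫ t in (0 : ℝ)..T, (g' t) ^ 2)
          + ∫ s in (0 : ℝ)..(T / n), (g' s) ^ 2) ∧
    (∀ ε R : ℝ, 0 < ε → ε < R →
      Real.sqrt ((∫ t in (0 : ℝ)..T, (g t) ^ 2) + ∫ t in (0 : ℝ)..T, (g' t) ^ 2) ≤ R - ε →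
      ∃ N : ℕ, ∀ n : ℕ, N ≤ n → 1 ≤ n →
        Real.sqrt (discNormSq T n (steklovAvg T n g)) ≤ R) := by
  have hg'2 : IntegrableOn (fun t => g' t ^ 2) (Icc 0 T) := by
    rw [integrableOn_Icc_iff_integrableOn_Ioc]
    exact hL2.integrable_sq
  have hbound := fun n (hn : 1 ≤ n) => discNormSq_steklovAvg_le hT hn hint hg'2 hac
  refine ⟨hbound, fun ε R hε _ hsqrt => ?_⟩
  obtain ⟨N, hN⟩ := eventually_atTop.1 <| eventually_sqrt_le_of_le_add hε hsqrt
    (tendsto_integral_zero_div_natCast hT.le hg'2) (eventually_atTop.2 ⟨1, hbound⟩)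
  exact ⟨N, fun n hn _ => hN n hn⟩
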